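/- arXiv:2307.01603 — 2 statements merged into one kernel-verified Lean document; each statement's English description precedes it below -/
import Mathlib

section
/- Let α > 3, let L₀ = 10^{10}, l_k = ⌊L_k^{1/4}⌋, L_{k+1} = l_k L_k, and let C > 0. Suppose (p_k)_{k≥k₀} is a sequence in [0,1] satisfying p_{k+1} ≤ C l_k⁴ (p_k² + C L_k^{-α}) for all k ≥ k₀. Then there exists k₀' (depending only on α and C) such that if k₀ ≥ k₀' and p_{k₀} ≤ L_{k₀}^{-α/2}, then p_k ≤ L_k^{-α/2} for all k ≥ k₀. -/
/-- Key one-step inequality. -/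
lemma stmt9_key (α C : ℝ) (hα : 3 < α) (hC : 0 < C) (x y : ℝ)
    (hx1 : 1 ≤ x) (hy1 : 1 ≤ y) (hyx : y ≤ x ^ ((1:ℝ)/4))
    (hD : C * (1 + C) ≤ x ^ ((3*α - 8)/8)) :
    C * (1 + C) * y ^ 4 * x ^ (-α) ≤ (y * x) ^ (-α/2) := by
  have hx0 : (0:ℝ) < x := by linarith
  have hy0 : (0:ℝ) < y := by linarith
  have key1 : y ^ ((4:ℝ) + α/2) ≤ x ^ (1 + α/8) := by
    calc y ^ ((4:ℝ) + α/2) ≤ (x ^ ((1:ℝ)/4)) ^ ((4:ℝ) + α/2) :=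
          Real.rpow_le_rpow hy0.le hyx (by linarith)
      _ = x ^ ((1/4) * ((4:ℝ) + α/2)) := (Real.rpow_mul hx0.le _ _).symm
      _ = x ^ (1 + α/8) := by congr 1; ring
  have key2 : C * (1 + C) * y ^ ((4:ℝ) + α/2) ≤ x ^ (α/2) := by
    calc C * (1 + C) * y ^ ((4:ℝ) + α/2) ≤ x ^ ((3*α-8)/8) * x ^ (1 + α/8) :=
          mul_le_mul hD key1 (by positivity) (by positivity)
      _ = x ^ (α/2) := by rw [← Real.rpow_add hx0]; congr 1; ring
  have hgoal : C * (1 + C) * y ^ 4 * (y * x) ^ (α/2) ≤ x ^ α := by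
    rw [Real.mul_rpow hy0.le hx0.le]
    calc C * (1 + C) * y ^ 4 * (y ^ (α/2) * x ^ (α/2))
        = (C * (1 + C) * (y ^ 4 * y ^ (α/2))) * x ^ (α/2) := by ring
      _ = (C * (1 + C) * y ^ ((4:ℝ) + α/2)) * x ^ (α/2) := by
          rw [← Real.rpow_natCast y 4, ← Real.rpow_add hy0]; norm_num
      _ ≤ x ^ (α/2) * x ^ (α/2) := mul_le_mul_of_nonneg_right key2 (by positivity)
      _ = x ^ α := by rw [← Real.rpow_add hx0]; congr 1; ring
  have hxα : (0:ℝ) < x ^ α := Real.rpow_pos_of_pos hx0 _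
  have hyxα : (0:ℝ) < (y * x) ^ (α/2) := Real.rpow_pos_of_pos (by positivity) _
  have hneg : -α/2 = -(α/2) := by ring
  rw [hneg, Real.rpow_neg hx0.le, Real.rpow_neg (by positivity : (0:ℝ) ≤ y * x)]
  rw [← div_eq_mul_inv, ← one_div, div_le_div_iff₀ hxα hyxα]
  nlinarith [hgoal]

/-- Multi-scale induction: a quadratic recursion with polynomial error propagates the bound
`p_k ≤ L_k^{-α/2}` along the scales `L_{k+1} = ⌊L_k^{1/4}⌋ L_k`, for `α > 3`, provided the
starting scale `k₀` is large enough (depending only on `α` and `C`). -/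
theorem stmt_9 (α C : ℝ) (hα : 3 < α) (hC : 0 < C)
    (L l : ℕ → ℕ) (hL0 : L 0 = 10 ^ 10)
    (hl : ∀ k, l k = ⌊((L k : ℝ)) ^ ((1 : ℝ) / 4)⌋₊)
    (hLrec : ∀ k, L (k + 1) = l k * L k) :
    ∃ k₀' : ℕ, ∀ k₀ : ℕ, k₀' ≤ k₀ → ∀ p : ℕ → ℝ,
      (∀ k, p k ∈ Set.Icc (0 : ℝ) 1) →
      (∀ k, k₀ ≤ k → p (k + 1) ≤ C * (l k : ℝ) ^ 4 * (p k ^ 2 + C * (L k : ℝ) ^ (-α))) →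
      p k₀ ≤ (L k₀ : ℝ) ^ (-α / 2) →
      ∀ k, k₀ ≤ k → p k ≤ (L k : ℝ) ^ (-α / 2) := by
  -- L stays large
  have hL_ge : ∀ k, 10 ^ 10 ≤ L k := by
    intro k
    induction k with
    | zero => omega
    | succ n ih =>
      have hl1 : 1 ≤ l n := by
        rw [hl]
        apply Nat.le_floor
        have h1 : (1:ℝ) ≤ (L n : ℝ) := by
          have : (1:ℕ) ≤ L n := by omega
          exact_mod_cast this
        calc ((1:ℕ):ℝ) = 1 ^ ((1:ℝ)/4) := by norm_num
          _ ≤ (L n : ℝ) ^ ((1:ℝ)/4) := Real.rpow_le_rpow zero_le_one h1 (by norm_num)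
      rw [hLrec]
      calc 10 ^ 10 ≤ L n := ih
        _ ≤ l n * L n := Nat.le_mul_of_pos_left _ hl1
  have hl_ge2 : ∀ k, 2 ≤ l k := by
    intro k
    rw [hl]
    apply Nat.le_floor
    have h16 : (16:ℝ) ≤ (L k : ℝ) := by
      have := hL_ge k
      have : (16:ℕ) ≤ L k := by omega
      exact_mod_cast this
    calc ((2:ℕ):ℝ) = (16:ℝ) ^ ((1:ℝ)/4) := by
          rw [show (16:ℝ) = 2 ^ (4:ℕ) by norm_num, ← Real.rpow_natCast 2 4,
            ← Real.rpow_mul (by norm_num : (0:ℝ) ≤ 2)]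
          norm_num
      _ ≤ (L k : ℝ) ^ ((1:ℝ)/4) := Real.rpow_le_rpow (by norm_num) h16 (by norm_num)
  have hL_pow : ∀ k, 2 ^ k ≤ L k := by
    intro k
    induction k with
    | zero => have := hL_ge 0; omega
    | succ n ih =>
      rw [hLrec, pow_succ, mul_comm (2^n) 2]
      exact Nat.mul_le_mul (hl_ge2 n) ih
  -- choose the threshold
  set E : ℝ := max (C * (1 + C)) 1 with hE
  have hE1 : (1:ℝ) ≤ E := le_max_right _ _
  have hE0 : (0:ℝ) ≤ E := by linarith
  set N : ℕ := ⌈E ^ 8⌉₊ with hN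
  obtain ⟨m, hm⟩ := pow_unbounded_of_one_lt N (by norm_num : (1:ℕ) < 2)
  refine ⟨m, ?_⟩
  intro k₀ hk₀ p hmem hrec hstart
  intro k hk
  induction k, hk using Nat.le_induction with
  | base => exact hstart
  | succ n hn ih =>
    -- basic facts at scale n
    have hxN : (N:ℝ) ≤ (L n : ℝ) := by
      have h1 : N ≤ 2 ^ n := le_trans hm.le (Nat.pow_le_pow_right (by norm_num) (by omega))
      have h2 : N ≤ L n := le_trans h1 (hL_pow n)
      exact_mod_cast h2
    have hx1 : (1:ℝ) ≤ (L n : ℝ) := by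
      have : (1:ℕ) ≤ L n := by have := hL_ge n; omega
      exact_mod_cast this
    have hx0 : (0:ℝ) < (L n : ℝ) := by linarith
    have hy1 : (1:ℝ) ≤ (l n : ℝ) := by
      have := hl_ge2 n
      have : (1:ℕ) ≤ l n := by omega
      exact_mod_cast this
    have hyx : (l n : ℝ) ≤ (L n : ℝ) ^ ((1:ℝ)/4) := by
      rw [hl]
      exact Nat.floor_le (Real.rpow_nonneg hx0.le _)
    have hD : C * (1 + C) ≤ (L n : ℝ) ^ ((3*α - 8)/8) := by
      calc C * (1 + C) ≤ E := le_max_left _ _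
        _ = (E ^ 8) ^ ((1:ℝ)/8) := by
            rw [← Real.rpow_natCast E 8, ← Real.rpow_mul hE0]
            norm_num
        _ ≤ (L n : ℝ) ^ ((1:ℝ)/8) := by
            apply Real.rpow_le_rpow (by positivity) _ (by norm_num)
            calc E ^ 8 ≤ (N : ℝ) := Nat.le_ceil _
              _ ≤ (L n : ℝ) := hxN
        _ ≤ (L n : ℝ) ^ ((3*α - 8)/8) := Real.rpow_le_rpow_of_exponent_le hx1 (by linarith)
    have hp0 : 0 ≤ p n := (hmem n).1
    have hpn2 : p n ^ 2 ≤ (L n : ℝ) ^ (-α) := by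
      calc p n ^ 2 ≤ ((L n : ℝ) ^ (-α/2)) ^ 2 := by
            apply pow_le_pow_left₀ hp0 ih
        _ = (L n : ℝ) ^ (-α) := by
            rw [← Real.rpow_natCast ((L n : ℝ) ^ (-α/2)) 2, ← Real.rpow_mul hx0.le]
            norm_num
    calc p (n + 1) ≤ C * (l n : ℝ) ^ 4 * (p n ^ 2 + C * (L n : ℝ) ^ (-α)) := hrec n hn
      _ ≤ C * (l n : ℝ) ^ 4 * ((L n : ℝ) ^ (-α) + C * (L n : ℝ) ^ (-α)) := by
          apply mul_le_mul_of_nonneg_left (by linarith) (by positivity)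
      _ = C * (1 + C) * (l n : ℝ) ^ 4 * (L n : ℝ) ^ (-α) := by ring
      _ ≤ ((l n : ℝ) * (L n : ℝ)) ^ (-α/2) :=
          stmt9_key α C hα hC _ _ hx1 hy1 hyx hD
      _ = (L (n + 1) : ℝ) ^ (-α/2) := by
          congr 1
          rw [hLrec]
          push_cast
          ring
end

section
/- Let α ≥ 1 and c > 0. Suppose (q_k)_{k≥1} is a sequence in [0,1] satisfying q_{k+1} ≤ q_k² + c · 3^{-α(k₀+k)} for all k ≥ 1, where k₀ ∈ ℕ. Then there exists k₀' (depending only on α and c) such that if k₀ ≥ k₀' and q₁ ≤ (1/2) 3^{-α}, then q_k ≤ (1/2) 3^{-αk} for all k ≥ 1. -/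
/-- Squaring recursion with exponentially small error: if `q_{k+1} ≤ q_k² + c 3^{-α(k₀+k)}`
and `q₁ ≤ (1/2) 3^{-α}`, then `q_k ≤ (1/2) 3^{-αk}` for all `k ≥ 1`, provided `k₀` is large
enough (depending only on `α ≥ 1` and `c > 0`). -/
theorem stmt_10 (α c : ℝ) (hα : 1 ≤ α) (hc : 0 < c) :
    ∃ k₀' : ℕ, ∀ k₀ : ℕ, k₀' ≤ k₀ → ∀ q : ℕ → ℝ,
      (∀ k, q k ∈ Set.Icc (0 : ℝ) 1) →
      (∀ k, 1 ≤ k → q (k + 1) ≤ q k ^ 2 + c * (3 : ℝ) ^ (-(α * (k₀ + k : ℕ)))) →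
      q 1 ≤ (1 / 2) * (3 : ℝ) ^ (-α) →
      ∀ k, 1 ≤ k → q k ≤ (1 / 2) * (3 : ℝ) ^ (-(α * k)) := by
  obtain ⟨N, hN⟩ := pow_unbounded_of_one_lt (4 * c) (by norm_num : (1:ℝ) < 3)
  refine ⟨N + 1, fun k₀ hk₀ q hq hrec h1 => ?_⟩
  have h3 : (0:ℝ) < 3 := by norm_num
  -- key bound on the error term
  have hkey : c * (3:ℝ) ^ (-(α * k₀)) ≤ (1/4) * (3:ℝ) ^ (-α) := by
    have hexp : (N:ℝ) ≤ α * k₀ - α := by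
      have hk : (N:ℝ) + 1 ≤ (k₀:ℝ) := by exact_mod_cast hk₀
      nlinarith [Nat.cast_nonneg (α := ℝ) N]
    have h4c : 4 * c ≤ (3:ℝ) ^ (α * k₀ - α) := by
      calc 4 * c ≤ (3:ℝ) ^ N := hN.le
        _ = (3:ℝ) ^ (N:ℝ) := by rw [Real.rpow_natCast]
        _ ≤ (3:ℝ) ^ (α * k₀ - α) :=
            Real.rpow_le_rpow_of_exponent_le (by norm_num) hexp
    have hpos : (0:ℝ) < (3:ℝ) ^ (-(α * k₀)) := Real.rpow_pos_of_pos h3 _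
    have := mul_le_mul_of_nonneg_right h4c hpos.le
    rw [← Real.rpow_add h3] at this
    have heq : α * ↑k₀ - α + -(α * ↑k₀) = -α := by ring
    rw [heq] at this
    linarith
  intro k hk
  induction k, hk using Nat.le_induction with
  | base => simpa using h1
  | succ k hk ih =>
    have hA : (0:ℝ) < (3:ℝ) ^ (-(α * k)) := Real.rpow_pos_of_pos h3 _
    have hAle : (3:ℝ) ^ (-(α * (k:ℕ))) ≤ (3:ℝ) ^ (-α) := by
      apply Real.rpow_le_rpow_of_exponent_le (by norm_num)
      have : (1:ℝ) ≤ (k:ℝ) := by exact_mod_cast hk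
      nlinarith
    have hsq : q k ^ 2 ≤ ((1/2) * (3:ℝ) ^ (-(α * (k:ℕ)))) ^ 2 :=
      pow_le_pow_left₀ (hq k).1 ih 2
    have hrec' := hrec k hk
    have hsplit : (3:ℝ) ^ (-(α * ((k₀ + k : ℕ) : ℝ))) =
        (3:ℝ) ^ (-(α * k₀)) * (3:ℝ) ^ (-(α * (k:ℕ))) := by
      rw [← Real.rpow_add h3]
      push_cast
      ring_nf
    have hsucc : (3:ℝ) ^ (-(α * ((k+1 : ℕ) : ℝ))) =
        (3:ℝ) ^ (-α) * (3:ℝ) ^ (-(α * (k:ℕ))) := by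
      rw [← Real.rpow_add h3]
      push_cast
      ring_nf
    rw [hsucc]
    rw [hsplit] at hrec'
    have h2 := mul_le_mul_of_nonneg_right hkey hA.le
    have h3' := mul_le_mul_of_nonneg_right hAle hA.le
    nlinarith [sq_nonneg ((3:ℝ) ^ (-(α * (k:ℕ))))]
end
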